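/- arXiv:2309.10562 — 2 statements merged into one kernel-verified Lean document; each statement's English description precedes it below -/
import Mathlib

section
/- The sequence spir (the sequence over {0,1} whose 1s occur at positions 0, 1, 3, 6, 10, …, with the number of 0s between the k-th and (k+1)-th one equal to k-1) is not pure morphic: there is no morphism f : {0,1} → {0,1}⁺ with f(1) = 1·u (u nonempty) such that spir = f^∞(1). -/
open Classical

/-- Applying a morphism `f : Γ → Γ⁺` to an infinite sequence `σ`. -/
def seqFlat {Γ : Type*} (f : Γ → List Γ) (σ : ℕ → Γ) (n : ℕ) : Γ :=
  (((List.range (n + 1)).flatMap fun i => f (σ i)).getD n (σ 0))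

/-- The sequence `spir`: its `1`s occur exactly at the triangular-number positions
`0, 1, 3, 6, 10, …`, with `k-1` zeros between the `k`-th and `(k+1)`-th one. -/
noncomputable def spir (n : ℕ) : ℕ :=
  if ∃ k ∈ Finset.range (n + 1), 2 * n = k * (k + 1) then 1 else 0

/-!
If `spir = f^∞(1)` with `f 1 = 1 :: u`, then `u` starts with `spir 1 = 1`, so `f 1` starts with
`1 1`. Since `spir 3 = 1`, the fixed point equation places a copy of `f 1` at some position `≥ 3`,
producing two adjacent `1`s there. But consecutive triangular numbers beyond `0, 1` differ by at
least `2`.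
-/

section FixedPoint

variable {Γ : Type*} (f : Γ → List Γ) (σ : ℕ → Γ)

def prefixImage (n : ℕ) : List Γ :=
  (List.range n).flatMap fun i => f (σ i)

theorem prefixImage_zero : prefixImage f σ 0 = [] := rfl

theorem prefixImage_succ (n : ℕ) :
    prefixImage f σ (n + 1) = prefixImage f σ n ++ f (σ n) := by
  simp [prefixImage, List.range_succ]

theorem prefixImage_isPrefix {n m : ℕ} (h : n ≤ m) : prefixImage f σ n <+: prefixImage f σ m := by
  obtain ⟨k, rfl⟩ := Nat.exists_eq_add_of_le h
  rw [prefixImage, prefixImage, List.range_add]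
  exact (List.prefix_append _ _).flatMap _

variable {f}

theorem le_length_prefixImage (hne : ∀ b, f b ≠ []) (n : ℕ) : n ≤ (prefixImage f σ n).length := by
  induction n with
  | zero => exact Nat.zero_le _
  | succ n ih =>
    rw [prefixImage_succ, List.length_append]
    have := List.length_pos_iff.mpr (hne (σ n))
    omega

theorem apply_length_prefixImage_add {σ : ℕ → Γ} (hne : ∀ b, f b ≠ []) (hfix : seqFlat f σ = σ)
    (n : ℕ) {j : ℕ} (hj : j < (f (σ n)).length) :
    σ ((prefixImage f σ n).length + j) = (f (σ n))[j] := by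
  set p := (prefixImage f σ n).length + j
  have hp : p < (prefixImage f σ (n + 1)).length := by
    rw [prefixImage_succ, List.length_append]; omega
  have hpre : prefixImage f σ (n + 1) <+: prefixImage f σ (p + 1) :=
    prefixImage_isPrefix f σ (by have := le_length_prefixImage σ hne n; omega)
  calc σ p = (prefixImage f σ (p + 1)).getD p (σ 0) := (congrFun hfix p).symm
    _ = (prefixImage f σ (n + 1))[p] := by
      rw [List.getD_eq_getElem _ _ (lt_of_lt_of_le hp hpre.length_le), hpre.getElem hp]
    _ = (f (σ n))[j] := by
      simp only [prefixImage_succ, List.getElem_append_right (Nat.le_add_right _ _), p,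
        Nat.add_sub_cancel_left]

end FixedPoint

theorem spir_eq_one_iff {n : ℕ} : spir n = 1 ↔ ∃ k, 2 * n = k * (k + 1) := by
  unfold spir
  split_ifs with h
  · simpa using ⟨h.choose, h.choose_spec.2⟩
  · refine ⟨by simp, fun ⟨k, hk⟩ => h ⟨k, Finset.mem_range.mpr (by nlinarith), hk⟩⟩

theorem spir_zero : spir 0 = 1 := spir_eq_one_iff.mpr ⟨0, rfl⟩

theorem spir_one : spir 1 = 1 := spir_eq_one_iff.mpr ⟨1, rfl⟩

theorem spir_three : spir 3 = 1 := spir_eq_one_iff.mpr ⟨2, rfl⟩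

theorem spir_succ_ne_one {n : ℕ} (hn : 2 ≤ n) (h : spir n = 1) : spir (n + 1) ≠ 1 := by
  rw [spir_eq_one_iff] at h
  rw [Ne, spir_eq_one_iff]
  rintro ⟨j, hj⟩
  obtain ⟨k, hk⟩ := h
  rcases lt_trichotomy j (k + 1) with hjk | rfl | hjk <;> nlinarith

/-- `spir` is not pure morphic: there is no morphism `f : {0,1} → {0,1}⁺` with
`f 1 = 1·u` (`u` nonempty) such that `spir = f^∞(1)`. -/
theorem spir_not_pure_morphic :
    ¬ ∃ (f : ℕ → List ℕ) (u : List ℕ) (σ : ℕ → ℕ),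
        (∀ b, f b ≠ []) ∧
        (∀ x ∈ f 0, x ≤ 1) ∧ (∀ x ∈ f 1, x ≤ 1) ∧
        f 1 = 1 :: u ∧ u ≠ [] ∧
        σ 0 = 1 ∧ seqFlat f σ = σ ∧ σ = spir := by
  rintro ⟨f, u, σ, hne, -, -, hf1, hu, -, hfix, rfl⟩
  obtain ⟨a, u, rfl⟩ := List.exists_cons_of_ne_nil hu
  have block (n : ℕ) (hn : spir n = 1) (j : ℕ) (hj : j < 2) :
      spir ((prefixImage f spir n).length + j) = [1, a][j] := by
    have hj' : j < (f (spir n)).length := by simp [hn, hf1]; omega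
    rw [apply_length_prefixImage_add hne hfix n hj']
    simp only [hn, hf1]
    interval_cases j <;> rfl
  have ha : a = 1 := by
    simpa [prefixImage_zero, spir_one] using (block 0 spir_zero 1 one_lt_two).symm
  subst ha
  exact spir_succ_ne_one (le_trans (by norm_num) (le_length_prefixImage spir hne 3))
    (block 3 spir_three 0 two_pos) (block 3 spir_three 1 one_lt_two)
end

section
/- Let fib = f^∞(0) for f(0) = 01, f(1) = 0, and let g, ρ be defined by g(0) = 2, g(1) = g(2) = 10, ρ(0) = ρ(2) = 0, ρ(1) = 1 on alphabet {0,1,2}. Then ρ(g^∞(1)) = tail(fib), i.e. ρ applied letterwise to the fixed point of g starting at 1 equals the Fibonacci sequence with its first letter removed. -/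
/-- The Fibonacci morphism `f 0 = 01`, `f 1 = 0`. -/
def fibMor : ℕ → List ℕ := fun n => if n = 0 then [0, 1] else [0]

/-- The morphism `g 0 = 2`, `g 1 = g 2 = 10` on `{0,1,2}`. -/
def gMor : ℕ → List ℕ := fun n => if n = 0 then [2] else [1, 0]

/-- The coding `ρ 0 = ρ 2 = 0`, `ρ 1 = 1`. -/
def ρCode : ℕ → ℕ := fun n => if n = 1 then 1 else 0


/-!
A fixed point `σ` of a nonerasing morphism `f` begins with every iterate `fⁿ(σ 0)`, so the
theorem reduces to a statement about finite words. Writing `F n a = fⁿ(a)` and `G n a = gⁿ(a)`,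
one shows by simultaneous induction that `0 · ρ(G (n+1) 1) = F (n+1) 0 · 0` and
`0 · ρ(G (n+1) 0) = F (n+1) 1 · 0`, using `F (n+1) 0 = F n 0 · F n 1`, `F (n+1) 1 = F n 0`,
`G (n+1) 1 = G n 1 · G n 0` and `G (n+2) 0 = G (n+1) 1`. Reading off letter `n + 1` of both sides of
the first identity gives the theorem.
-/

open List

section FixedPoint

variable {Γ : Type*}

lemma iterate_flatMap_append (f : Γ → List Γ) (n : ℕ) (l₁ l₂ : List Γ) :
    (·.flatMap f)^[n] (l₁ ++ l₂) = (·.flatMap f)^[n] l₁ ++ (·.flatMap f)^[n] l₂ := by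
  induction n with
  | zero => rfl
  | succ n ih => simp only [Function.iterate_succ_apply', ih, flatMap_append]

/-- `seqFlat f σ n` is letter `n` of `flatPrefix f σ (n + 1)`. -/
def flatPrefix (f : Γ → List Γ) (σ : ℕ → Γ) (m : ℕ) : List Γ :=
  (range m).flatMap fun i => f (σ i)

lemma flatPrefix_prefix (f : Γ → List Γ) (σ : ℕ → Γ) {a b : ℕ} (h : a ≤ b) :
    flatPrefix f σ a <+: flatPrefix f σ b := by
  obtain ⟨k, rfl⟩ := Nat.exists_eq_add_of_le h
  simp only [flatPrefix, range_add, flatMap_append]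
  exact prefix_append _ _

variable {f : Γ → List Γ} {σ : ℕ → Γ}

lemma le_length_flatPrefix (hf : ∀ c, f c ≠ []) (m : ℕ) : m ≤ (flatPrefix f σ m).length := by
  induction m with
  | zero => simp
  | succ m ih =>
    have := length_pos_iff.mpr (hf (σ m))
    simp only [flatPrefix, range_succ, flatMap_append, flatMap_singleton, length_append] at ih ⊢
    omega

lemma getElem_flatPrefix (hf : ∀ c, f c ≠ []) (hfix : seqFlat f σ = σ) {m k : ℕ}
    (hk : k < (flatPrefix f σ m).length) : (flatPrefix f σ m)[k] = σ k := by
  have hk' : k < (flatPrefix f σ (k + 1)).length := le_length_flatPrefix hf (k + 1)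
  have hσk : σ k = (flatPrefix f σ (k + 1))[k] := by
    rw [← getD_eq_getElem _ (σ 0) hk']
    exact (congrFun hfix k).symm
  rw [hσk]
  rcases le_total m (k + 1) with h | h
  · exact (flatPrefix_prefix f σ h).getElem hk
  · exact ((flatPrefix_prefix f σ h).getElem hk').symm

lemma map_range_length_flatPrefix (hf : ∀ c, f c ≠ []) (hfix : seqFlat f σ = σ) (m : ℕ) :
    (range (flatPrefix f σ m).length).map σ = flatPrefix f σ m :=
  ext_getElem (by simp) fun _ _ hk => by simp [getElem_flatPrefix hf hfix hk]

lemma map_range_length_iterate_flatMap (hf : ∀ c, f c ≠ []) (hfix : seqFlat f σ = σ) (n : ℕ) :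
    (range ((·.flatMap f)^[n] [σ 0]).length).map σ = (·.flatMap f)^[n] [σ 0] := by
  induction n with
  | zero => rfl
  | succ n ih =>
    have hpre : ((·.flatMap f)^[n] [σ 0]).flatMap f =
        flatPrefix f σ ((·.flatMap f)^[n] [σ 0]).length := by
      conv_lhs => rw [← ih]
      simp only [flatPrefix, flatMap_map]
    rw [Function.iterate_succ_apply', hpre]
    exact map_range_length_flatPrefix hf hfix _

lemma getElem?_iterate_flatMap (hf : ∀ c, f c ≠ []) (hfix : seqFlat f σ = σ) {n k : ℕ}
    (hk : k < ((·.flatMap f)^[n] [σ 0]).length) :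
    ((·.flatMap f)^[n] [σ 0])[k]? = some (σ k) := by
  rw [← map_range_length_iterate_flatMap hf hfix n]
  simp [hk]

end FixedPoint

def fibIter (n a : ℕ) : List ℕ := (·.flatMap fibMor)^[n] [a]

def gIter (n a : ℕ) : List ℕ := (·.flatMap gMor)^[n] [a]

lemma fibMor_ne_nil (a : ℕ) : fibMor a ≠ [] := by
  unfold fibMor; split <;> simp

lemma gMor_ne_nil (a : ℕ) : gMor a ≠ [] := by
  unfold gMor; split <;> simp

lemma fibIter_succ_zero (n : ℕ) : fibIter (n + 1) 0 = fibIter n 0 ++ fibIter n 1 := by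
  unfold fibIter
  rw [Function.iterate_succ_apply, ← iterate_flatMap_append]; rfl

lemma fibIter_succ_one (n : ℕ) : fibIter (n + 1) 1 = fibIter n 0 := by
  rw [fibIter, Function.iterate_succ_apply]; rfl

lemma gIter_succ_one (n : ℕ) : gIter (n + 1) 1 = gIter n 1 ++ gIter n 0 := by
  unfold gIter
  rw [Function.iterate_succ_apply, ← iterate_flatMap_append]; rfl

lemma gIter_succ_succ_zero (n : ℕ) : gIter (n + 2) 0 = gIter (n + 1) 1 := by
  rw [gIter_succ_one]
  unfold gIter
  rw [Function.iterate_succ_apply, Function.iterate_succ_apply, ← iterate_flatMap_append]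
  rfl

lemma le_length_fibIter_zero : ∀ n, n + 1 ≤ (fibIter n 0).length
  | 0 => le_rfl
  | 1 => by decide
  | n + 2 => by
    have := le_length_fibIter_zero n
    have := le_length_fibIter_zero (n + 1)
    rw [fibIter_succ_zero, fibIter_succ_one, length_append]
    omega

lemma cons_map_ρCode_gIter (n : ℕ) :
    0 :: (gIter (n + 1) 1).map ρCode = fibIter (n + 1) 0 ++ [0] ∧
    0 :: (gIter (n + 1) 0).map ρCode = fibIter (n + 1) 1 ++ [0] := by
  induction n with
  | zero => exact ⟨rfl, rfl⟩
  | succ n ih =>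
    refine ⟨?_, by rw [gIter_succ_succ_zero, fibIter_succ_one, ih.1]⟩
    rw [gIter_succ_one, fibIter_succ_zero, map_append, ← cons_append, ih.1, append_assoc,
      singleton_append, ih.2, append_assoc]

/-- `ρ(g^∞(1)) = tail(fib)`: the coding `ρ` applied letterwise to the fixed point of
`g` starting at `1` equals the binary Fibonacci sequence with its first letter removed. -/
theorem rho_g_eq_tail_fib (σf σg : ℕ → ℕ)
    (hf0 : σf 0 = 0) (hffix : seqFlat fibMor σf = σf)
    (hg0 : σg 0 = 1) (hgfix : seqFlat gMor σg = σg) :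
    ∀ n, ρCode (σg n) = σf (n + 1) := by
  intro n
  have hkey := (cons_map_ρCode_gIter n).1
  have hlenF : n + 1 < (fibIter (n + 1) 0).length := le_length_fibIter_zero (n + 1)
  have hlenG : n < (gIter (n + 1) 1).length := by
    have := congrArg length hkey
    simp only [length_cons, length_map, length_append] at this
    omega
  have hF : (fibIter (n + 1) 0)[n + 1]? = some (σf (n + 1)) := by
    have := getElem?_iterate_flatMap (n := n + 1) (k := n + 1) fibMor_ne_nil hffix
    rw [hf0] at this
    exact this hlenF
  have hG : (gIter (n + 1) 1)[n]? = some (σg n) := by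
    have := getElem?_iterate_flatMap (n := n + 1) (k := n) gMor_ne_nil hgfix
    rw [hg0] at this
    exact this hlenG
  simpa [getElem?_append_left hlenF, hF, hG] using congrArg (·[n + 1]?) hkey
end
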